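/- arXiv:1806.07962 — 2 statements merged into one kernel-verified Lean document; each statement's English description precedes it below -/
import Mathlib

section
/- For every positive integer k and real x with |x| < 1, x ≠ 0, ∫₀^π θ sin θ · ((1 + x cos θ)^{1/k} + (1 − x cos θ)^{1/k}) dθ = (πk/((k+1)x)) · ((1+x)^{(k+1)/k} − (1−x)^{(k+1)/k}). -/
/-!
The weight `sin θ · g θ`, with `g θ = (1 + x cos θ)^(1/k) + (1 - x cos θ)^(1/k)`, is invariant
under `θ ↦ π - θ`, so the factor `θ` may be replaced by its mean `π / 2`. What remains has the
explicit primitive `θ ↦ -(1 ± x cos θ)^(1 + 1/k) / ((1 + 1/k)(± x))`.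
-/

open Real intervalIntegral MeasureTheory

theorem intervalIntegral.integral_id_mul_of_symm {f : ℝ → ℝ} {a b : ℝ}
    (hf : ∀ t, f (a + b - t) = f t) (hfi : IntervalIntegrable f volume a b) :
    ∫ t in a..b, t * f t = (a + b) / 2 * ∫ t in a..b, f t := by
  have hreflect : ∫ t in a..b, t * f t = ∫ t in a..b, (a + b - t) * f t := by
    have h := integral_comp_sub_left (a := a) (b := b) (fun t => t * f t) (a + b)
    simp only [add_sub_cancel_right, add_sub_cancel_left, hf] at h
    exact h.symm
  have hsplit : ∫ t in a..b, (a + b - t) * f t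
      = (a + b) * (∫ t in a..b, f t) - ∫ t in a..b, t * f t := by
    have hid : IntervalIntegrable (fun t => t * f t) volume a b :=
      hfi.continuousOn_mul continuousOn_id
    rw [← integral_const_mul, ← integral_sub (hfi.const_mul _) hid]
    exact integral_congr fun t _ => by ring
  linarith

theorem one_add_mul_cos_pos {x : ℝ} (hx : |x| < 1) (θ : ℝ) : 0 < 1 + x * cos θ := by
  have h : |x * cos θ| < 1 :=
    (abs_mul x (cos θ)).trans_lt
      ((mul_le_of_le_one_right (abs_nonneg x) (abs_cos_le_one θ)).trans_lt hx)
  linarith [neg_abs_le (x * cos θ)]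

theorem continuous_sin_mul_one_add_mul_cos_rpow {x : ℝ} (hx : |x| < 1) (q : ℝ) :
    Continuous fun θ => sin θ * (1 + x * cos θ) ^ q :=
  continuous_sin.mul ((continuous_const.add (continuous_const.mul continuous_cos)).rpow_const
    fun θ => Or.inl (one_add_mul_cos_pos hx θ).ne')

theorem integral_sin_mul_one_add_mul_cos_rpow {x q : ℝ} (hx : |x| < 1) (hx0 : x ≠ 0)
    (hq : q + 1 ≠ 0) :
    ∫ θ in (0:ℝ)..π, sin θ * (1 + x * cos θ) ^ q
      = ((1 + x) ^ (q + 1) - (1 - x) ^ (q + 1)) / ((q + 1) * x) := by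
  have hderiv : ∀ θ, HasDerivAt (fun θ => -(1 + x * cos θ) ^ (q + 1) / ((q + 1) * x))
      (sin θ * (1 + x * cos θ) ^ q) θ := by
    intro θ
    have hbase : HasDerivAt (fun θ => 1 + x * cos θ) (-(x * sin θ)) θ := by
      simpa using ((hasDerivAt_cos θ).const_mul x).const_add 1
    refine ((hbase.rpow_const (p := q + 1)
      (Or.inl (one_add_mul_cos_pos hx θ).ne')).neg.div_const ((q + 1) * x)).congr_deriv ?_
    rw [add_sub_cancel_right]
    field_simp
  rw [integral_eq_sub_of_hasDerivAt (fun θ _ => hderiv θ)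
      ((continuous_sin_mul_one_add_mul_cos_rpow hx q).intervalIntegrable 0 π),
    cos_pi, cos_zero]
  ring_nf

theorem stmt_14 (k : ℕ) (hk : 0 < k) (x : ℝ) (hx : |x| < 1) (hx0 : x ≠ 0) :
    ∫ θ in (0:ℝ)..Real.pi,
        θ * Real.sin θ *
          ((1 + x * Real.cos θ) ^ ((1 : ℝ) / k) + (1 - x * Real.cos θ) ^ ((1 : ℝ) / k))
      = Real.pi * k / ((k + 1) * x) *
        ((1 + x) ^ (((k : ℝ) + 1) / k) - (1 - x) ^ (((k : ℝ) + 1) / k)) := by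
  have hk' : (k : ℝ) ≠ 0 := Nat.cast_ne_zero.2 hk.ne'
  set q : ℝ := 1 / k with hq_def
  have hq : q + 1 = ((k : ℝ) + 1) / k := by rw [hq_def, div_add_one hk', add_comm]
  have hint : ∀ {x' : ℝ}, |x'| < 1 → IntervalIntegrable
      (fun θ => sin θ * (1 + x' * cos θ) ^ q) volume 0 π := fun hx' =>
    (continuous_sin_mul_one_add_mul_cos_rpow hx' q).intervalIntegrable 0 π
  have hxneg : |-x| < 1 := by rwa [abs_neg]
  calc _ = ∫ θ in (0:ℝ)..π, θ * (sin θ * (1 + x * cos θ) ^ q + sin θ * (1 + -x * cos θ) ^ q) :=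
        integral_congr fun θ _ => by ring_nf
    _ = π / 2 * ((∫ θ in (0:ℝ)..π, sin θ * (1 + x * cos θ) ^ q)
          + ∫ θ in (0:ℝ)..π, sin θ * (1 + -x * cos θ) ^ q) := by
        rw [integral_id_mul_of_symm (fun θ => by rw [zero_add, sin_pi_sub, cos_pi_sub]; ring_nf)
          ((hint hx).add (hint hxneg)), integral_add (hint hx) (hint hxneg), zero_add]
    _ = _ := by
        rw [integral_sin_mul_one_add_mul_cos_rpow hx hx0 (by positivity),
          integral_sin_mul_one_add_mul_cos_rpow hxneg (neg_ne_zero.2 hx0) (by positivity), hq]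
        field_simp
        simp only [← sub_eq_add_neg, sub_neg_eq_add]
        ring
end

section
/- For real x with |x| < 1, x ≠ 0, ∫₀^π θ sin θ · ((1 + x cos θ)^{1/3} + (1 − x cos θ)^{1/3}) dθ = (3π/(4x)) · ((1+x)^{4/3} − (1−x)^{4/3}). -/
/-!
The reflection `θ ↦ π - θ` fixes `sin θ` and flips the sign of `cos θ`, under which the bracket is
even; so the weight `θ` may be replaced by its mean `π / 2`. The remaining integral becomes, after
`u = x cos θ`, the integral of `(1 + u)^{1/3} + (1 - u)^{1/3}` over `[-x, x]`, i.e. twice that of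
`w^{1/3}` over `[1 - x, 1 + x]`.
-/
open Real intervalIntegral MeasureTheory

theorem integral_mul_eq_half_mul_integral_of_symm {g : ℝ → ℝ} {a : ℝ}
    (hg : IntervalIntegrable g volume 0 a) (hsymm : ∀ θ, g (a - θ) = g θ) :
    ∫ θ in 0..a, θ * g θ = a / 2 * ∫ θ in 0..a, g θ := by
  have hreflect : ∫ θ in 0..a, θ * g θ = ∫ θ in 0..a, (a - θ) * g θ := by
    have := integral_comp_sub_left (a := 0) (b := a) (fun θ => θ * g θ) a
    simp only [hsymm, sub_self, sub_zero] at this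
    exact this.symm
  have hsplit : ∫ θ in 0..a, (a - θ) * g θ = (a * ∫ θ in 0..a, g θ) - ∫ θ in 0..a, θ * g θ := by
    simp_rw [sub_mul]
    rw [integral_sub (hg.const_mul a) (hg.continuousOn_mul (continuousOn_id' _)),
      intervalIntegral.integral_const_mul]
  linear_combination (hreflect.trans hsplit) / 2

theorem integral_sin_mul_comp_cos {F : ℝ → ℝ} (hF : Continuous F) :
    ∫ θ in 0..π, sin θ * F (cos θ) = ∫ u in -1..1, F u := by
  have := integral_comp_mul_deriv (a := 0) (b := π) (f := cos) (f' := fun θ => -sin θ)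
    (fun θ _ => hasDerivAt_cos θ) continuous_sin.neg.continuousOn hF
  simp only [Function.comp_apply, mul_neg, intervalIntegral.integral_neg, cos_zero, cos_pi] at this
  rw [integral_symm 1, ← this]
  simp_rw [mul_comm, neg_neg]

theorem integral_add_rpow_add_sub_rpow (c x : ℝ) {r : ℝ} (hr : -1 < r) :
    ∫ v in -x..x, ((c + v) ^ r + (c - v) ^ r) =
      2 * ((c + x) ^ (r + 1) - (c - x) ^ (r + 1)) / (r + 1) := by
  have hint : IntervalIntegrable (fun w : ℝ => w ^ r) volume (c - x) (c + x) :=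
    intervalIntegrable_rpow' hr
  have h1 := hint.comp_add_left c
  have h2 := hint.symm.comp_sub_left c
  simp only [sub_sub_cancel_left, add_sub_cancel_left, sub_sub_cancel, sub_add_cancel_left] at h1 h2
  rw [integral_add h1 h2, integral_comp_add_left (fun w => w ^ r),
    integral_comp_sub_left (fun w => w ^ r), integral_rpow (Or.inl hr), integral_rpow (Or.inl hr)]
  ring_nf

theorem stmt_15_general (x : ℝ) (hx0 : x ≠ 0) :
    ∫ θ in (0:ℝ)..Real.pi,
        θ * Real.sin θ *
          ((1 + x * Real.cos θ) ^ ((1 : ℝ) / 3) + (1 - x * Real.cos θ) ^ ((1 : ℝ) / 3))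
      = 3 * Real.pi / (4 * x) *
        ((1 + x) ^ ((4 : ℝ) / 3) - (1 - x) ^ ((4 : ℝ) / 3)) := by
  set F : ℝ → ℝ := fun u => (1 + u) ^ ((1 : ℝ) / 3) + (1 - u) ^ ((1 : ℝ) / 3)
  have hF : Continuous F := by
    have := Real.continuous_rpow_const (q := (1 : ℝ) / 3) (by norm_num)
    fun_prop
  have hF_even : ∀ u, F (-u) = F u := fun u => by
    simp only [F, sub_neg_eq_add, ← sub_eq_add_neg]
    exact add_comm _ _
  have hG : Continuous fun θ => sin θ * F (x * cos θ) := by fun_prop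
  calc _ = ∫ θ in 0..π, θ * (sin θ * F (x * cos θ)) := by simp only [F, mul_assoc]
    _ = π / 2 * ∫ θ in 0..π, sin θ * F (x * cos θ) :=
        integral_mul_eq_half_mul_integral_of_symm (hG.intervalIntegrable 0 π) fun θ => by
          rw [sin_pi_sub, cos_pi_sub, mul_neg, hF_even]
    _ = π / 2 * (x⁻¹ * ∫ v in -x..x, F v) := by
        rw [integral_sin_mul_comp_cos (F := fun u => F (x * u)) (hF.comp (continuous_const_mul x)),
          integral_comp_mul_left F hx0, smul_eq_mul, mul_neg_one, mul_one]
    _ = _ := by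
        rw [integral_add_rpow_add_sub_rpow 1 x (by norm_num)]
        norm_num
        field_simp

theorem stmt_15 (x : ℝ) (hx : |x| < 1) (hx0 : x ≠ 0) :
    ∫ θ in (0:ℝ)..Real.pi,
        θ * Real.sin θ *
          ((1 + x * Real.cos θ) ^ ((1 : ℝ) / 3) + (1 - x * Real.cos θ) ^ ((1 : ℝ) / 3))
      = 3 * Real.pi / (4 * x) *
        ((1 + x) ^ ((4 : ℝ) / 3) - (1 - x) ^ ((4 : ℝ) / 3)) :=
  stmt_15_general x hx0
end
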